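/- Let k be a number field, let k' be a subfield with ℚ ⊆ k' ⊆ k, and let α ∈ k with α ∉ k'. Then ℵ(k'(α)) − ℵ(k')·[k : k'] ≥ 2^{λ(k') − λ(k)} · ([k : k'])^{λ(k') − λ(k) + 1}. -/

import Mathlib

/-- `lambdaTower K F` is the maximum length of a tower of distinct subfields of `K` beginning at
`ℚ` and ending at `F` (so `lambdaTower K ⊥ = 0`). -/
noncomputable def lambdaTower (K : Type*) [Field K] [NumberField K]
    (F : IntermediateField ℚ K) : ℕ :=
  sSup {n | ∃ c : Fin (n + 1) → IntermediateField ℚ K,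
    StrictMono c ∧ c 0 = ⊥ ∧ c (Fin.last n) = F}

/-- `aleph K F = (2 [K : F])^{λ(F) - λ(K)}`. -/
noncomputable def aleph (K : Type*) [Field K] [NumberField K]
    (F : IntermediateField ℚ K) : ℝ :=
  (2 * (Module.finrank F K : ℝ)) ^
    ((lambdaTower K F : ℤ) - (lambdaTower K (⊤ : IntermediateField ℚ K) : ℤ))

/-!
Write `e = λ(k') - λ(k)` and `r = [k : k']`, so that `ℵ(k')·[k : k'] = 2^e r^{e+1}` and the claim
reads `(2r)^{e+1} ≤ ℵ(k'(α))`. Since `k' ⊊ k'(α) ⊆ k`, extending a maximal tower gives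
`e + 1 ≤ λ(k'(α)) - λ(k) ≤ 0`, while `1 ≤ [k : k'(α)] ≤ r`. A nonpositive power of `2r` is at most
the same power of `2[k : k'(α)]`, which in turn is at most its power with the larger exponent
`λ(k'(α)) - λ(k)`, and this is `ℵ(k'(α))`.
-/

open Module IntermediateField

lemma zpow_le_zpow_left_of_nonpos {R : Type*} [Field R] [LinearOrder R] [IsStrictOrderedRing R]
    {a b : R} {n : ℤ} (ha : 0 < a) (hab : a ≤ b) (hn : n ≤ 0) :
    b ^ n ≤ a ^ n := by
  obtain ⟨m, rfl⟩ := Int.exists_eq_neg_ofNat hn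
  simp only [zpow_neg, zpow_natCast]
  gcongr

namespace lambdaTower

def towerLengths (K : Type*) [Field K] [NumberField K] (F : IntermediateField ℚ K) : Set ℕ :=
  {n | ∃ c : Fin (n + 1) → IntermediateField ℚ K, StrictMono c ∧ c 0 = ⊥ ∧ c (Fin.last n) = F}

variable {K : Type*} [Field K] [NumberField K]

lemma succ_mem_towerLengths {F F' : IntermediateField ℚ K} {n : ℕ}
    (hn : n ∈ towerLengths K F) (h : F < F') : n + 1 ∈ towerLengths K F' := by
  obtain ⟨c, hc, hc0, hcn⟩ := hn
  refine ⟨Fin.insertNth (Fin.last (n + 1)) F' c,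
    Fin.strictMono_insertNth_last hc F' (hcn ▸ h), ?_, by simp⟩
  rw [Fin.insertNth_last', ← Fin.castSucc_zero, Fin.snoc_castSucc, hc0]

lemma towerLengths_nonempty (F : IntermediateField ℚ K) : (towerLengths K F).Nonempty := by
  have zero_mem : 0 ∈ towerLengths K ⊥ :=
    ⟨fun _ ↦ ⊥, Fin.strictMono_iff_lt_succ.2 Fin.elim0, rfl, rfl⟩
  rcases eq_or_ne F ⊥ with rfl | hF
  · exact ⟨0, zero_mem⟩
  · exact ⟨1, succ_mem_towerLengths zero_mem (bot_lt_iff_ne_bot.2 hF)⟩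

lemma towerLengths_bddAbove (F : IntermediateField ℚ K) : BddAbove (towerLengths K F) := by
  have := Field.finite_intermediateField_of_exists_primitive_element ℚ K
    (Field.exists_primitive_element ℚ K)
  refine ⟨Nat.card (IntermediateField ℚ K), fun n ⟨c, hc, _⟩ ↦ ?_⟩
  have := Nat.card_le_card_of_injective c hc.injective
  simp only [Nat.card_eq_fintype_card, Fintype.card_fin] at this
  omega

lemma mem_towerLengths (F : IntermediateField ℚ K) : lambdaTower K F ∈ towerLengths K F :=
  Nat.sSup_mem (towerLengths_nonempty F) (towerLengths_bddAbove F)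

lemma strictMono : StrictMono (lambdaTower K) := fun F F' h ↦
  le_csSup (towerLengths_bddAbove F') (succ_mem_towerLengths (mem_towerLengths F) h)

end lambdaTower

section

variable {K : Type*} [Field K] [NumberField K]

lemma aleph_mul_two_finrank_le {F F' : IntermediateField ℚ K} (h : F < F') :
    aleph K F * (2 * finrank F K) ≤ aleph K F' := by
  set e : ℤ := lambdaTower K F - lambdaTower K ⊤
  set e' : ℤ := lambdaTower K F' - lambdaTower K ⊤
  have he : e + 1 ≤ e' := by
    have := lambdaTower.strictMono h
    omega
  have he' : e' ≤ 0 := by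
    have := lambdaTower.strictMono.monotone (le_top : F' ≤ ⊤)
    omega
  have hr' : (1 : ℝ) ≤ finrank F' K := by exact_mod_cast finrank_pos
  have hrr' : (finrank F' K : ℝ) ≤ finrank F K := by exact_mod_cast finrank_le_of_le_left h.le
  have hr : (0 : ℝ) < 2 * finrank F K := by linarith
  calc aleph K F * (2 * finrank F K) = (2 * finrank F K : ℝ) ^ (e + 1) :=
        (zpow_add_one₀ hr.ne' e).symm
    _ ≤ (2 * finrank F' K : ℝ) ^ (e + 1) :=
        zpow_le_zpow_left_of_nonpos (by positivity) (by linarith) (by omega)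
    _ ≤ aleph K F' := zpow_le_zpow_right₀ (by linarith) he

lemma lt_sup_adjoin_of_notMem {F : IntermediateField ℚ K} {α : K} (hα : α ∉ F) :
    F < F ⊔ adjoin ℚ {α} :=
  lt_of_le_of_ne le_sup_left fun h ↦
    hα (h ▸ (le_sup_right : adjoin ℚ {α} ≤ F ⊔ adjoin ℚ {α}) (mem_adjoin_simple_self ℚ α))

end

/-- **(Akhtari–Vaaler, Lemma 6.2).**  If `ℚ ⊆ k' ⊆ k` and `α ∈ k`, `α ∉ k'`, then
`ℵ(k'(α)) - ℵ(k')·[k : k'] ≥ 2^{λ(k') - λ(k)}·([k : k'])^{λ(k') - λ(k) + 1}`. -/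
theorem aleph_adjoin_sub_ge (K : Type*) [Field K] [NumberField K]
    (F : IntermediateField ℚ K) (α : K) (hα : α ∉ F) :
    (2 : ℝ) ^ ((lambdaTower K F : ℤ) - (lambdaTower K (⊤ : IntermediateField ℚ K) : ℤ)) *
        (Module.finrank F K : ℝ) ^
          ((lambdaTower K F : ℤ) - (lambdaTower K (⊤ : IntermediateField ℚ K) : ℤ) + 1) ≤
      aleph K (F ⊔ IntermediateField.adjoin ℚ ({α} : Set K)) -
        aleph K F * (Module.finrank F K : ℝ) := by
  have key := aleph_mul_two_finrank_le (lt_sup_adjoin_of_notMem hα)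
  have hr : (finrank F K : ℝ) ≠ 0 := by exact_mod_cast finrank_pos.ne'
  have hlhs : (2 : ℝ) ^ ((lambdaTower K F : ℤ) - (lambdaTower K ⊤ : ℤ)) *
      (finrank F K : ℝ) ^ ((lambdaTower K F : ℤ) - (lambdaTower K ⊤ : ℤ) + 1) =
      aleph K F * finrank F K := by
    rw [aleph, mul_zpow, zpow_add_one₀ hr, mul_assoc]
  linarith
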